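/- Let H be a real Hilbert space, and let T₁, T₂ : H → H be θ₁-averaged and θ₂-averaged mappings with θ₁, θ₂ ∈ (0,1). Suppose there exist ρ₁, ρ₂ > 0 such that θ₁ ≤ ρ₂/(ρ₁ + ρ₂) and θ₂ ≤ ρ₁/(ρ₁ + ρ₂). Let (x_{1,k})_k and (x_{2,k})_k be sequences in H such that: (a) x_{1,k} ⇀ x₁ and x_{2,k} ⇀ x₂; (b) T₁(x_{1,k}) ⇀ y and T₂(x_{2,k}) ⇀ y; (c) ρ₁(x_{1,k} − T₁(x_{1,k})) + ρ₂(x_{2,k} − T₂(x_{2,k})) → 0 strongly; (d) T₁(x_{1,k}) − T₂(x_{2,k}) → 0 strongly. Then T₁(x₁) = T₂(x₂) = y. -/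

import Mathlib

/-!
For a `θ`-averaged `T`, `(1 - 2θ)‖(I - T)x - (I - T)z‖² ≤ 2θ⟪Tx - Tz, (I - T)x - (I - T)z⟫`.
With `dᵢ = (I - Tᵢ)xᵢₖ - (I - Tᵢ)xᵢ` and `aᵢ = Tᵢxᵢₖ - Tᵢxᵢ`, the balance conditions turn this into
`(ρ₁ - ρ₂)‖d₁‖² ≤ 2ρ₂⟪a₁, d₁⟫` and `(ρ₂ - ρ₁)‖d₂‖² ≤ 2ρ₁⟪a₂, d₂⟫`. Weighted by `ρ₁²`, `ρ₂²` and
added, both sides become inner products of weakly convergent sequences with the strongly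
convergent ones `ρ₁d₁ + ρ₂d₂` and `a₁ - a₂`, so the inequality passes to the weak limits. With
`δᵢ = Tᵢxᵢ - y` the limit reads `(ρ₁ + ρ₂)(ρ₁²‖δ₁‖² + ρ₂²‖δ₂‖²) ≤ 0`.
-/

open scoped InnerProductSpace

open Filter Topology

section

variable {H : Type*} [NormedAddCommGroup H] [InnerProductSpace ℝ H]

def WeakTendsto (x : ℕ → H) (l : H) : Prop :=
  ∀ u : H, Tendsto (fun k => ⟪x k, u⟫_ℝ) atTop (𝓝 ⟪l, u⟫_ℝ)

namespace WeakTendsto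

variable {x y : ℕ → H} {l m : H}

theorem add (hx : WeakTendsto x l) (hy : WeakTendsto y m) :
    WeakTendsto (fun k => x k + y k) (l + m) := fun u => by
  simpa only [inner_add_left] using (hx u).add (hy u)

theorem sub (hx : WeakTendsto x l) (hy : WeakTendsto y m) :
    WeakTendsto (fun k => x k - y k) (l - m) := fun u => by
  simpa only [inner_sub_left] using (hx u).sub (hy u)

theorem sub_const (hx : WeakTendsto x l) (c : H) :
    WeakTendsto (fun k => x k - c) (l - c) := fun u => by
  simpa only [inner_sub_left] using (hx u).sub_const ⟪c, u⟫_ℝ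

theorem const_smul (hx : WeakTendsto x l) (c : ℝ) :
    WeakTendsto (fun k => c • x k) (c • l) := fun u => by
  simpa only [real_inner_smul_left] using (hx u).const_mul c

theorem unique (hl : WeakTendsto x l) (hm : WeakTendsto x m) : l = m :=
  ext_inner_right ℝ fun u => tendsto_nhds_unique (hl u) (hm u)

/-- Weakly convergent sequences are bounded, by the uniform boundedness principle. -/
theorem exists_norm_le [CompleteSpace H] (hx : WeakTendsto x l) : ∃ C, ∀ k, ‖x k‖ ≤ C := by
  have hpt : ∀ u : H, ∃ C, ∀ k, ‖innerSL ℝ (x k) u‖ ≤ C := fun u => by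
    obtain ⟨C, hC⟩ := (hx u).norm.bddAbove_range
    exact ⟨C, fun k => hC ⟨k, rfl⟩⟩
  obtain ⟨C, hC⟩ := banach_steinhaus hpt
  exact ⟨C, fun k => by simpa only [innerSL_apply_norm] using hC k⟩

theorem tendsto_inner [CompleteSpace H] (hx : WeakTendsto x l) (hy : Tendsto y atTop (𝓝 m)) :
    Tendsto (fun k => ⟪x k, y k⟫_ℝ) atTop (𝓝 ⟪l, m⟫_ℝ) := by
  obtain ⟨C, hC⟩ := hx.exists_norm_le
  have hsmall : Tendsto (fun k => ⟪x k, y k - m⟫_ℝ) atTop (𝓝 0) := by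
    refine squeeze_zero_norm (fun k => ?_) (by simpa using (hy.sub_const m).norm.const_mul C)
    exact (norm_inner_le_norm _ _).trans (mul_le_mul_of_nonneg_right (hC k) (norm_nonneg _))
  simpa only [inner_sub_right, add_sub_cancel, add_zero] using (hx m).add hsmall

end WeakTendsto

theorem Filter.Tendsto.weakTendsto {x : ℕ → H} {l : H} (hx : Tendsto x atTop (𝓝 l)) :
    WeakTendsto x l := fun _ => hx.inner tendsto_const_nhds

def IsAveraged (θ : ℝ) (T : H → H) : Prop :=
  ∃ R : H → H, (∀ x y : H, ‖R x - R y‖ ≤ ‖x - y‖) ∧ ∀ x : H, T x = (1 - θ) • x + θ • R x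

namespace IsAveraged

variable {θ : ℝ} {T : H → H}

theorem one_sub_two_mul_norm_sq_le (hT : IsAveraged θ T) (x z : H) :
    (1 - 2 * θ) * ‖(x - T x) - (z - T z)‖ ^ 2 ≤
      2 * θ * ⟪T x - T z, (x - T x) - (z - T z)⟫_ℝ := by
  obtain ⟨R, hR, hTR⟩ := hT
  rw [hTR x, hTR z]
  set a := x - z
  set b := R x - R z
  have hT : (1 - θ) • x + θ • R x - ((1 - θ) • z + θ • R z) = (1 - θ) • a + θ • b := by module
  have hd : x - ((1 - θ) • x + θ • R x) - (z - ((1 - θ) • z + θ • R z)) = θ • (a - b) := by module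
  have hba : ‖b‖ ^ 2 ≤ ‖a‖ ^ 2 := pow_le_pow_left₀ (norm_nonneg _) (hR x z) 2
  have hgap : 2 * θ * ⟪(1 - θ) • a + θ • b, θ • (a - b)⟫_ℝ - (1 - 2 * θ) * ‖θ • (a - b)‖ ^ 2 =
      θ ^ 2 * (‖a‖ ^ 2 - ‖b‖ ^ 2) := by
    simp only [← real_inner_self_eq_norm_sq, inner_add_left, inner_sub_left, inner_sub_right,
      real_inner_smul_left, real_inner_smul_right, real_inner_comm a b]
    ring
  rw [hT, hd]
  linarith [mul_nonneg (sq_nonneg θ) (sub_nonneg.2 hba)]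

theorem mul_norm_sq_le_of_balanced (hT : IsAveraged θ T) (hθ : 0 < θ) {ρ ρ' : ℝ} (hρ' : 0 ≤ ρ')
    (hbal : θ * (ρ + ρ') ≤ ρ') (x z : H) :
    (ρ - ρ') * ‖(x - T x) - (z - T z)‖ ^ 2 ≤ 2 * ρ' * ⟪T x - T z, (x - T x) - (z - T z)⟫_ℝ := by
  have key := mul_le_mul_of_nonneg_left (hT.one_sub_two_mul_norm_sq_le x z) hρ'
  refine le_of_mul_le_mul_left ?_ hθ
  nlinarith [mul_le_mul_of_nonneg_right (show θ * (ρ - ρ') ≤ ρ' * (1 - 2 * θ) by linarith)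
    (sq_nonneg ‖(x - T x) - (z - T z)‖)]

end IsAveraged

section Balanced

variable {ρ₁ ρ₂ : ℝ}

theorem balanced_inner_le {d₁ d₂ a₁ a₂ : H}
    (h₁ : (ρ₁ - ρ₂) * ‖d₁‖ ^ 2 ≤ 2 * ρ₂ * ⟪a₁, d₁⟫_ℝ)
    (h₂ : (ρ₂ - ρ₁) * ‖d₂‖ ^ 2 ≤ 2 * ρ₁ * ⟪a₂, d₂⟫_ℝ) :
    (ρ₁ - ρ₂) * ⟪ρ₁ • d₁ - ρ₂ • d₂, ρ₁ • d₁ + ρ₂ • d₂⟫_ℝ ≤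
      2 * ρ₁ * ρ₂ * (⟪a₁, ρ₁ • d₁ + ρ₂ • d₂⟫_ℝ - ρ₂ * ⟪d₂, a₁ - a₂⟫_ℝ) := by
  have hexp : ⟪ρ₁ • d₁ - ρ₂ • d₂, ρ₁ • d₁ + ρ₂ • d₂⟫_ℝ = ρ₁ ^ 2 * ‖d₁‖ ^ 2 - ρ₂ ^ 2 * ‖d₂‖ ^ 2 := by
    simp only [← real_inner_self_eq_norm_sq, inner_add_right, inner_sub_left,
      real_inner_smul_left, real_inner_smul_right, real_inner_comm d₁ d₂]
    ring
  have hexp' : ⟪a₁, ρ₁ • d₁ + ρ₂ • d₂⟫_ℝ - ρ₂ * ⟪d₂, a₁ - a₂⟫_ℝ =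
      ρ₁ * ⟪a₁, d₁⟫_ℝ + ρ₂ * ⟪a₂, d₂⟫_ℝ := by
    simp only [inner_add_right, inner_sub_right, real_inner_smul_right, real_inner_comm d₂]
    ring
  rw [hexp, hexp']
  nlinarith [mul_le_mul_of_nonneg_left h₁ (sq_nonneg ρ₁), mul_le_mul_of_nonneg_left h₂ (sq_nonneg ρ₂)]

theorem eq_zero_of_balanced_inner_le (hρ₁ : 0 < ρ₁) (hρ₂ : 0 < ρ₂) {δ₁ δ₂ : H}
    (h : (ρ₁ - ρ₂) * ⟪ρ₁ • δ₁ - ρ₂ • δ₂, ρ₁ • δ₁ + ρ₂ • δ₂⟫_ℝ ≤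
      2 * ρ₁ * ρ₂ * (⟪-δ₁, ρ₁ • δ₁ + ρ₂ • δ₂⟫_ℝ - ρ₂ * ⟪δ₂, -δ₁ - -δ₂⟫_ℝ)) :
    δ₁ = 0 ∧ δ₂ = 0 := by
  have hexp : (ρ₁ + ρ₂) * (ρ₁ ^ 2 * ‖δ₁‖ ^ 2 + ρ₂ ^ 2 * ‖δ₂‖ ^ 2) ≤ 0 := by
    simp only [← real_inner_self_eq_norm_sq, inner_add_right, inner_sub_left, inner_sub_right,
      inner_neg_left, inner_neg_right, real_inner_smul_left, real_inner_smul_right,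
      real_inner_comm δ₁ δ₂] at h ⊢
    linarith
  have hsum : ρ₁ ^ 2 * ‖δ₁‖ ^ 2 + ρ₂ ^ 2 * ‖δ₂‖ ^ 2 = 0 :=
    (nonpos_of_mul_nonpos_right hexp (add_pos hρ₁ hρ₂)).antisymm (by positivity)
  obtain ⟨h₁, h₂⟩ := (add_eq_zero_iff_of_nonneg (by positivity) (by positivity)).1 hsum
  simpa [hρ₁.ne', hρ₂.ne'] using And.intro h₁ h₂

theorem eq_zero_of_weakTendsto_of_balanced [CompleteSpace H] (hρ₁ : 0 < ρ₁) (hρ₂ : 0 < ρ₂)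
    {d₁ d₂ a₁ a₂ : ℕ → H} {δ₁ δ₂ L M : H}
    (hd₁ : WeakTendsto d₁ δ₁) (hd₂ : WeakTendsto d₂ δ₂)
    (ha₁ : WeakTendsto a₁ (-δ₁)) (ha₂ : WeakTendsto a₂ (-δ₂))
    (hL : Tendsto (fun k => ρ₁ • d₁ k + ρ₂ • d₂ k) atTop (𝓝 L))
    (hM : Tendsto (fun k => a₁ k - a₂ k) atTop (𝓝 M))
    (h₁ : ∀ k, (ρ₁ - ρ₂) * ‖d₁ k‖ ^ 2 ≤ 2 * ρ₂ * ⟪a₁ k, d₁ k⟫_ℝ)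
    (h₂ : ∀ k, (ρ₂ - ρ₁) * ‖d₂ k‖ ^ 2 ≤ 2 * ρ₁ * ⟪a₂ k, d₂ k⟫_ℝ) :
    δ₁ = 0 ∧ δ₂ = 0 := by
  obtain rfl : L = ρ₁ • δ₁ + ρ₂ • δ₂ :=
    hL.weakTendsto.unique ((hd₁.const_smul ρ₁).add (hd₂.const_smul ρ₂))
  obtain rfl : M = -δ₁ - -δ₂ := hM.weakTendsto.unique (ha₁.sub ha₂)
  refine eq_zero_of_balanced_inner_le hρ₁ hρ₂
    (le_of_tendsto_of_tendsto' (b := atTop) ?_ ?_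
      fun k => balanced_inner_le (h₁ k) (h₂ k))
  · exact (((hd₁.const_smul ρ₁).sub (hd₂.const_smul ρ₂)).tendsto_inner hL).const_mul _
  · exact ((ha₁.tendsto_inner hL).sub ((hd₂.tendsto_inner hM).const_mul ρ₂)).const_mul _

end Balanced

end

theorem demiclosedness_two_balanced_averaged_general {H : Type*} [NormedAddCommGroup H]
    [InnerProductSpace ℝ H] [CompleteSpace H]
    (T₁ T₂ : H → H) (θ₁ θ₂ : ℝ) (hθ₁ : 0 < θ₁)
    (hθ₂ : 0 < θ₂)
    (hT₁ : ∃ R : H → H, (∀ x y : H, ‖R x - R y‖ ≤ ‖x - y‖) ∧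
      ∀ x : H, T₁ x = (1 - θ₁) • x + θ₁ • R x)
    (hT₂ : ∃ R : H → H, (∀ x y : H, ‖R x - R y‖ ≤ ‖x - y‖) ∧
      ∀ x : H, T₂ x = (1 - θ₂) • x + θ₂ • R x)
    (ρ₁ ρ₂ : ℝ) (hρ₁ : 0 < ρ₁) (hρ₂ : 0 < ρ₂)
    (hbal₁ : θ₁ ≤ ρ₂ / (ρ₁ + ρ₂)) (hbal₂ : θ₂ ≤ ρ₁ / (ρ₁ + ρ₂))
    (x₁ x₂ : ℕ → H) (xl₁ xl₂ y : H)
    (ha₁ : ∀ u : H,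
      Filter.Tendsto (fun k => ⟪x₁ k, u⟫_ℝ) Filter.atTop (nhds ⟪xl₁, u⟫_ℝ))
    (ha₂ : ∀ u : H,
      Filter.Tendsto (fun k => ⟪x₂ k, u⟫_ℝ) Filter.atTop (nhds ⟪xl₂, u⟫_ℝ))
    (hb₁ : ∀ u : H,
      Filter.Tendsto (fun k => ⟪T₁ (x₁ k), u⟫_ℝ) Filter.atTop (nhds ⟪y, u⟫_ℝ))
    (hb₂ : ∀ u : H,
      Filter.Tendsto (fun k => ⟪T₂ (x₂ k), u⟫_ℝ) Filter.atTop (nhds ⟪y, u⟫_ℝ))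
    (hc : Filter.Tendsto
      (fun k => ρ₁ • (x₁ k - T₁ (x₁ k)) + ρ₂ • (x₂ k - T₂ (x₂ k)))
      Filter.atTop (nhds 0))
    (hd : Filter.Tendsto (fun k => T₁ (x₁ k) - T₂ (x₂ k)) Filter.atTop (nhds 0)) :
    T₁ xl₁ = y ∧ T₂ xl₂ = y := by
  have hsum : 0 < ρ₁ + ρ₂ := add_pos hρ₁ hρ₂
  have hbal₁' : θ₁ * (ρ₁ + ρ₂) ≤ ρ₂ := (le_div_iff₀ hsum).1 hbal₁
  have hbal₂' : θ₂ * (ρ₂ + ρ₁) ≤ ρ₁ := by rw [add_comm]; exact (le_div_iff₀ hsum).1 hbal₂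
  have hd₁ := (WeakTendsto.sub ha₁ hb₁).sub_const (xl₁ - T₁ xl₁)
  have hd₂ := (WeakTendsto.sub ha₂ hb₂).sub_const (xl₂ - T₂ xl₂)
  rw [sub_sub_sub_cancel_left] at hd₁ hd₂
  have ha₁' := WeakTendsto.sub_const hb₁ (T₁ xl₁)
  have ha₂' := WeakTendsto.sub_const hb₂ (T₂ xl₂)
  rw [← neg_sub] at ha₁' ha₂'
  have hL := hc.sub_const (ρ₁ • (xl₁ - T₁ xl₁) + ρ₂ • (xl₂ - T₂ xl₂))
  have hM := hd.sub_const (T₁ xl₁ - T₂ xl₂)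
  obtain ⟨h₁, h₂⟩ := eq_zero_of_weakTendsto_of_balanced hρ₁ hρ₂ hd₁ hd₂ ha₁' ha₂'
    (hL.congr fun k => by module) (hM.congr fun k => by abel)
    (fun k => IsAveraged.mul_norm_sq_le_of_balanced hT₁ hθ₁ hρ₂.le hbal₁' (x₁ k) xl₁)
    (fun k => IsAveraged.mul_norm_sq_le_of_balanced hT₂ hθ₂ hρ₁.le hbal₂' (x₂ k) xl₂)
  exact ⟨sub_eq_zero.1 h₁, sub_eq_zero.1 h₂⟩

/-- Demiclosedness principle for two balanced averaged operators. -/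
theorem demiclosedness_two_balanced_averaged {H : Type*} [NormedAddCommGroup H]
    [InnerProductSpace ℝ H] [CompleteSpace H]
    (T₁ T₂ : H → H) (θ₁ θ₂ : ℝ) (hθ₁ : 0 < θ₁) (hθ₁' : θ₁ < 1)
    (hθ₂ : 0 < θ₂) (hθ₂' : θ₂ < 1)
    (hT₁ : ∃ R : H → H, (∀ x y : H, ‖R x - R y‖ ≤ ‖x - y‖) ∧
      ∀ x : H, T₁ x = (1 - θ₁) • x + θ₁ • R x)
    (hT₂ : ∃ R : H → H, (∀ x y : H, ‖R x - R y‖ ≤ ‖x - y‖) ∧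
      ∀ x : H, T₂ x = (1 - θ₂) • x + θ₂ • R x)
    (ρ₁ ρ₂ : ℝ) (hρ₁ : 0 < ρ₁) (hρ₂ : 0 < ρ₂)
    (hbal₁ : θ₁ ≤ ρ₂ / (ρ₁ + ρ₂)) (hbal₂ : θ₂ ≤ ρ₁ / (ρ₁ + ρ₂))
    (x₁ x₂ : ℕ → H) (xl₁ xl₂ y : H)
    (ha₁ : ∀ u : H,
      Filter.Tendsto (fun k => ⟪x₁ k, u⟫_ℝ) Filter.atTop (nhds ⟪xl₁, u⟫_ℝ))
    (ha₂ : ∀ u : H,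
      Filter.Tendsto (fun k => ⟪x₂ k, u⟫_ℝ) Filter.atTop (nhds ⟪xl₂, u⟫_ℝ))
    (hb₁ : ∀ u : H,
      Filter.Tendsto (fun k => ⟪T₁ (x₁ k), u⟫_ℝ) Filter.atTop (nhds ⟪y, u⟫_ℝ))
    (hb₂ : ∀ u : H,
      Filter.Tendsto (fun k => ⟪T₂ (x₂ k), u⟫_ℝ) Filter.atTop (nhds ⟪y, u⟫_ℝ))
    (hc : Filter.Tendsto
      (fun k => ρ₁ • (x₁ k - T₁ (x₁ k)) + ρ₂ • (x₂ k - T₂ (x₂ k)))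
      Filter.atTop (nhds 0))
    (hd : Filter.Tendsto (fun k => T₁ (x₁ k) - T₂ (x₂ k)) Filter.atTop (nhds 0)) :
    T₁ xl₁ = y ∧ T₂ xl₂ = y :=
  demiclosedness_two_balanced_averaged_general T₁ T₂ θ₁ θ₂ hθ₁ hθ₂ hT₁ hT₂ ρ₁ ρ₂ hρ₁ hρ₂ hbal₁ hbal₂
    x₁ x₂ xl₁ xl₂ y ha₁ ha₂ hb₁ hb₂ hc hd
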